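/- Let H be a model graph, a, b, c, d positive integers with n = a+b+c+d, and let m be an integer with Σ_{(p,q)∈Full(H)} (#p)(#q) ≤ m ≤ n(n−1)/2 − Σ_{(p,q)∈Dotted(H)} (#p)(#q). Then there exists a simple undirected graph G with n vertices and exactly m edges admitting an H-partition with class sizes a, b, c, d. -/

import Mathlib

/-!
Label `n` vertices so that the classes have sizes `a, b, c, d`, and pull the full and dotted
edges of `H` back along the labeling to graphs `F` and `D` on the vertices. Since no edge of `H`
is both full and dotted, `F ≤ Dᶜ`, and every graph `G` with `F ≤ G ≤ Dᶜ` admits the labeling as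
an `H`-partition. Counting degrees, `2|E(F)|` and `2|E(D)|` are the two sums in the bounds, so
`|E(F)| ≤ m ≤ |E(Dᶜ)|`, and an edge set between those of `F` and `Dᶜ` with exactly `m` edges
exists.
-/

inductive Label : Type
  | A | B | C | D
deriving DecidableEq

instance : Fintype Label :=
  ⟨{Label.A, Label.B, Label.C, Label.D}, by intro x; cases x <;> simp⟩

/-- A model graph: an undirected graph on the four labels A,B,C,D, each edge
marked full or dotted (never both), symmetric and irreflexive. -/
structure ModelGraph : Type where
  full : Label → Label → Bool
  dotted : Label → Label → Bool
  full_symm : ∀ p q, full p q = full q p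
  dotted_symm : ∀ p q, dotted p q = dotted q p
  full_irrefl : ∀ p, full p p = false
  dotted_irrefl : ∀ p, dotted p p = false
  not_both : ∀ p q, ¬ (full p q = true ∧ dotted p q = true)

/-- `ℓ` is an `H`-partition of `G`: all four classes nonempty, full edges of `H`
force complete adjacency, dotted edges force complete nonadjacency. -/
def IsHPartition {V : Type} (G : SimpleGraph V) (H : ModelGraph) (ℓ : V → Label) : Prop :=
  (∀ p : Label, ∃ v, ℓ v = p) ∧
  (∀ u v, H.full (ℓ u) (ℓ v) = true → G.Adj u v) ∧
  (∀ u v, H.dotted (ℓ u) (ℓ v) = true → ¬ G.Adj u v)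

/-- Label `p` is possible for vertex `v` relative to the partial labeling `pl`. -/
def Possible {V : Type} (G : SimpleGraph V) (H : ModelGraph)
    (pl : V → Option Label) (v : V) (p : Label) : Prop :=
  (∀ q y, H.full p q = true → pl y = some q → G.Adj v y) ∧
  (∀ q y, H.dotted p q = true → pl y = some q → ¬ G.Adj v y)

/-- Full-edge neighborhood of a set of labels. -/
def NFull (H : ModelGraph) (L : Finset Label) : Finset Label :=
  Finset.univ.filter (fun q => ∃ p ∈ L, H.full p q = true)

/-- Dotted-edge neighborhood of a set of labels. -/
def NDotted (H : ModelGraph) (L : Finset Label) : Finset Label :=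
  Finset.univ.filter (fun q => ∃ p ∈ L, H.dotted p q = true)

/-- Class sizes `a,b,c,d` as a function of the label. -/
def cnt (a b c d : ℕ) : Label → ℕ
  | .A => a | .B => b | .C => c | .D => d
open Finset

theorem Fintype.sum_comp_eq_sum_card_fiber_smul {V W M : Type*} [Fintype V] [Fintype W]
    [DecidableEq W] [AddCommMonoid M] (f : V → W) (g : W → M) :
    ∑ v, g (f v) = ∑ w, #{v | f v = w} • g w := by
  rw [← Finset.sum_fiberwise' univ f g]
  simp only [Finset.sum_const]

theorem Fintype.exists_fin_labeling_card_fiber {W : Type*} [Fintype W] [DecidableEq W]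
    (k : W → ℕ) {n : ℕ} (hn : ∑ w, k w = n) :
    ∃ ℓ : Fin n → W, ∀ w, #{v | ℓ v = w} = k w := by
  let e : (Σ w, Fin (k w)) ≃ Fin n := Fintype.equivFinOfCardEq (by simp [hn])
  refine ⟨fun v => (e.symm v).1, fun w => ?_⟩
  rw [← Fintype.card_subtype, ← Fintype.card_fin (k w)]
  exact Fintype.card_congr ((e.symm.subtypeEquiv fun _ => Iff.rfl).trans (Equiv.sigmaSubtype w))

namespace SimpleGraph

variable {V W : Type*}

theorem sum_degree_comap [Fintype V] [Fintype W] [DecidableEq W] (G : SimpleGraph W)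
    [DecidableRel G.Adj] (f : V → W) :
    ∑ v, (G.comap f).degree v =
      ∑ p, ∑ q, if G.Adj p q then #{v | f v = p} * #{v | f v = q} else 0 := by
  have hdeg (u : V) :
      (G.comap f).degree u = ∑ q, #{v | f v = q} * if G.Adj (f u) q then 1 else 0 := by
    rw [← card_neighborFinset_eq_degree, neighborFinset_eq_filter, card_filter]
    exact Fintype.sum_comp_eq_sum_card_fiber_smul f (fun q => if G.Adj (f u) q then 1 else 0)
  simp only [hdeg]
  rw [Fintype.sum_comp_eq_sum_card_fiber_smul f
    (fun p => ∑ q, #{v | f v = q} * if G.Adj p q then 1 else 0)]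
  refine sum_congr rfl fun p _ => ?_
  rw [smul_eq_mul, mul_sum]
  refine sum_congr rfl fun q _ => ?_
  split_ifs <;> simp

theorem two_mul_ncard_edgeSet_comap [Fintype V] [Fintype W] [DecidableEq W] (G : SimpleGraph W)
    [DecidableRel G.Adj] (f : V → W) :
    2 * (G.comap f).edgeSet.ncard =
      ∑ p, ∑ q, if G.Adj p q then #{v | f v = p} * #{v | f v = q} else 0 := by
  classical
  rw [← coe_edgeFinset, Set.ncard_coe_finset, ← sum_degrees_eq_twice_card_edges,
    sum_degree_comap]

theorem ncard_edgeSet_add_ncard_edgeSet_compl [Fintype V] (G : SimpleGraph V) :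
    G.edgeSet.ncard + Gᶜ.edgeSet.ncard = (Fintype.card V).choose 2 := by
  classical
  rw [← Set.ncard_union_eq (disjoint_edgeSet.mpr disjoint_compl_right), ← edgeSet_sup,
    sup_compl_eq_top, ← coe_edgeFinset, Set.ncard_coe_finset,
    card_edgeFinset_top_eq_card_choose_two]

theorem exists_between_ncard_edgeSet_eq [Finite V] {F G : SimpleGraph V} {m : ℕ} (h : F ≤ G)
    (hF : F.edgeSet.ncard ≤ m) (hG : m ≤ G.edgeSet.ncard) :
    ∃ K : SimpleGraph V, F ≤ K ∧ K ≤ G ∧ K.edgeSet.ncard = m := by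
  obtain ⟨S, hFS, hSG, hS⟩ := Set.exists_subsuperset_card_eq (edgeSet_mono h) hF hG
  have hK : (fromEdgeSet S).edgeSet = S := by
    rw [edgeSet_fromEdgeSet, sdiff_eq_left, Set.disjoint_left]
    exact fun e he => not_isDiag_of_mem_edgeSet G (hSG he)
  refine ⟨fromEdgeSet S, ?_, ?_, by rw [hK, hS]⟩
  · rw [← edgeSet_subset_edgeSet, hK]; exact hFS
  · rw [← edgeSet_subset_edgeSet, hK]; exact hSG

theorem comap_le_compl_comap {G G' : SimpleGraph W} (h : Disjoint G G') (f : V → W) :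
    G.comap f ≤ (G'.comap f)ᶜ := fun _ _ huv =>
  ⟨(G.comap f).ne_of_adj huv, fun huv' => h.le_bot (show (G ⊓ G').Adj _ _ from ⟨huv, huv'⟩)⟩

end SimpleGraph

open SimpleGraph

namespace ModelGraph

variable (H : ModelGraph)

def fullGraph : SimpleGraph Label where
  Adj p q := H.full p q = true
  symm := ⟨fun p q h => (H.full_symm p q).symm.trans h⟩
  loopless := ⟨fun p h => by simp [H.full_irrefl] at h⟩

def dottedGraph : SimpleGraph Label where
  Adj p q := H.dotted p q = true
  symm := ⟨fun p q h => (H.dotted_symm p q).symm.trans h⟩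
  loopless := ⟨fun p h => by simp [H.dotted_irrefl] at h⟩

@[simp]
theorem fullGraph_adj {p q : Label} : H.fullGraph.Adj p q ↔ H.full p q = true := Iff.rfl

@[simp]
theorem dottedGraph_adj {p q : Label} : H.dottedGraph.Adj p q ↔ H.dotted p q = true := Iff.rfl

instance : DecidableRel H.fullGraph.Adj := fun _ _ => inferInstanceAs (Decidable (_ = true))

instance : DecidableRel H.dottedGraph.Adj := fun _ _ => inferInstanceAs (Decidable (_ = true))

theorem disjoint_fullGraph_dottedGraph : Disjoint H.fullGraph H.dottedGraph :=
  disjoint_iff_inf_le.mpr fun p q h => H.not_both p q h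

end ModelGraph

theorem isHPartition_of_le {V : Type} {G : SimpleGraph V} {H : ModelGraph} {ℓ : V → Label}
    (hℓ : Function.Surjective ℓ) (hfull : H.fullGraph.comap ℓ ≤ G)
    (hdotted : G ≤ (H.dottedGraph.comap ℓ)ᶜ) : IsHPartition G H ℓ :=
  ⟨hℓ, fun _ _ h => hfull h, fun _ _ h hG => (hdotted hG).2 h⟩

theorem sum_cnt (a b c d : ℕ) : ∑ p, cnt a b c d p = a + b + c + d := by
  show ∑ p ∈ {Label.A, Label.B, Label.C, Label.D}, cnt a b c d p = _
  simp [cnt, add_assoc]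

theorem cnt_pos {a b c d : ℕ} (ha : 0 < a) (hb : 0 < b) (hc : 0 < c) (hd : 0 < d) (p : Label) :
    0 < cnt a b c d p := by
  cases p <;> assumption

/-- for every m between m_min and m_max there is a graph with n
vertices and m edges admitting an H-partition with class sizes a,b,c,d. -/
theorem stmt_6 (H : ModelGraph) (a b c d : ℕ)
    (ha : 0 < a) (hb : 0 < b) (hc : 0 < c) (hd : 0 < d)
    (n : ℕ) (hn : n = a + b + c + d) (m : ℕ)
    (hlow : (∑ p : Label, ∑ q : Label,
        if H.full p q = true then cnt a b c d p * cnt a b c d q else 0) / 2 ≤ m)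
    (hhigh : m ≤ n * (n - 1) / 2 -
        (∑ p : Label, ∑ q : Label,
          if H.dotted p q = true then cnt a b c d p * cnt a b c d q else 0) / 2) :
    ∃ (G : SimpleGraph (Fin n)) (ℓ : Fin n → Label),
      IsHPartition G H ℓ ∧ (∀ p : Label, {v | ℓ v = p}.ncard = cnt a b c d p) ∧
      G.edgeSet.ncard = m := by
  obtain ⟨ℓ, hℓ⟩ :=
    Fintype.exists_fin_labeling_card_fiber (cnt a b c d) ((sum_cnt a b c d).trans hn.symm)
  have hsurj : Function.Surjective ℓ := fun p => by
    obtain ⟨v, hv⟩ := card_pos.mp ((hℓ p).symm ▸ cnt_pos ha hb hc hd p)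
    exact ⟨v, (mem_filter.mp hv).2⟩
  have hfull := two_mul_ncard_edgeSet_comap H.fullGraph ℓ
  have hdotted := two_mul_ncard_edgeSet_comap H.dottedGraph ℓ
  simp only [hℓ, ModelGraph.fullGraph_adj, ModelGraph.dottedGraph_adj] at hfull hdotted
  have hcompl := ncard_edgeSet_add_ncard_edgeSet_compl (H.dottedGraph.comap ℓ)
  rw [Fintype.card_fin, Nat.choose_two_right] at hcompl
  obtain ⟨G, hFG, hGD, hG⟩ := exists_between_ncard_edgeSet_eq
    (comap_le_compl_comap H.disjoint_fullGraph_dottedGraph ℓ) (m := m) (by omega) (by omega)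
  refine ⟨G, ℓ, isHPartition_of_le hsurj hFG hGD, fun p => ?_, hG⟩
  rw [Set.ncard_eq_toFinset_card', Set.toFinset_ofPred, hℓ]
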